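/- arXiv:1807.11092 — 2 statements merged into one kernel-verified Lean document; each statement's English description precedes it below -/
import Mathlib

section
/- Let λ₁, λ₂ : ℕ → ℂ be sequences and K ≥ 1 a real number such that ∑_{1 ≤ n ≤ Z} |λ₁(n)|² ≤ K·Z and ∑_{1 ≤ n ≤ Z} |λ₂(n)|² ≤ K·Z for every real Z ≥ 1. Let c be a positive integer and a, b integers with gcd(a, c) = gcd(b, c) = 1, and let X, Y ≥ 1 be real numbers. Then ∑ |λ₁(n)|·|λ₂(m)|, where the sum runs over pairs of positive integers n ≤ X, m ≤ Y with a·m ≡ b·n (mod c), is at most K·√(X·(Y/c + 1))·√(Y·(X/c + 1)). -/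
/-!
Cauchy–Schwarz over the admissible pairs `(n, m)` bounds the sum by the geometric mean of
`∑ₙ |λ₁(n)|² · #{m}` and `∑ₘ |λ₂(m)|² · #{n}`. As `a` and `b` are invertible mod `c`, for fixed `n`
the admissible `m ≤ Y` lie in a single residue class mod `c`, so there are at most `Y/c + 1` of
them, and symmetrically for `n`; the second-moment bounds then finish the estimate.
-/

open Complex Real

open Finset

lemma Nat.card_filter_modEq_Icc_le (c M v : ℕ) :
    #{m ∈ Icc 1 M | m ≡ v [MOD c]} ≤ M / c + 1 := by
  simpa using card_le_card_of_injOn (t := range (M / c + 1)) (· / c)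
    (fun m hm ↦ by
      simp only [coe_filter, Set.mem_ofPred_eq, mem_Icc] at hm
      simpa [Nat.lt_succ_iff] using Nat.div_le_div_right hm.1.2)
    (fun m hm m' hm' (h : m / c = m' / c) ↦ by
      simp only [coe_filter, Set.mem_ofPred_eq] at hm hm'
      rw [← Nat.div_add_mod m c, ← Nat.div_add_mod m' c, h, hm.2.trans hm'.2.symm])

lemma Int.ModEq.cancel_left_of_gcd_eq_one {a m x y : ℤ} (ha : Int.gcd a m = 1)
    (h : a * x ≡ a * y [ZMOD m]) : x ≡ y [ZMOD m] :=
  Int.modEq_iff_dvd.2 <| Int.dvd_of_dvd_mul_right_of_gcd_one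
    (by rw [mul_sub]; exact Int.modEq_iff_dvd.1 h) (by rwa [Int.gcd_comm])

lemma card_filter_mul_modEq_Icc_floor_le {c : ℕ} {a : ℤ} (ha : Int.gcd a c = 1) (t : ℤ) {Y : ℝ}
    (hY : 0 ≤ Y) :
    (#{m ∈ Icc 1 ⌊Y⌋₊ | a * (m : ℕ) ≡ t [ZMOD c]} : ℝ) ≤ Y / c + 1 := by
  set S := {m ∈ Icc 1 ⌊Y⌋₊ | a * (m : ℕ) ≡ t [ZMOD c]}
  obtain hS | ⟨m₀, hm₀⟩ := S.eq_empty_or_nonempty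
  · rw [hS, card_empty, Nat.cast_zero]
    positivity
  -- `a` is invertible mod `c`, so all solutions lie in the residue class of `m₀`
  have hsub : S ⊆ {m ∈ Icc 1 ⌊Y⌋₊ | m ≡ m₀ [MOD c]} := by
    intro m hm
    simp only [S, mem_filter] at hm hm₀ ⊢
    exact ⟨hm.1, Int.natCast_modEq_iff.mp ((hm.2.trans hm₀.2.symm).cancel_left_of_gcd_eq_one ha)⟩
  calc (#S : ℝ) ≤ ((⌊Y⌋₊ / c + 1 : ℕ) : ℝ) := by
        exact_mod_cast (card_le_card hsub).trans (Nat.card_filter_modEq_Icc_le _ _ _)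
    _ ≤ ⌊Y⌋₊ / c + 1 := by push_cast; gcongr; exact Nat.cast_div_le
    _ ≤ Y / c + 1 := by gcongr; exact Nat.floor_le hY

lemma sum_ite_mul_le_sqrt_mul_sqrt {α β : Type*} (s : Finset α) (t : Finset β) (R : α → β → Prop)
    [DecidableRel R] (f : α → ℝ) (g : β → ℝ) {A B : ℝ}
    (hA : ∀ x ∈ s, #{y ∈ t | R x y} ≤ A) (hB : ∀ y ∈ t, #{x ∈ s | R x y} ≤ B) :
    ∑ x ∈ s, ∑ y ∈ t, (if R x y then f x * g y else 0)
      ≤ √(A * ∑ x ∈ s, f x ^ 2) * √(B * ∑ y ∈ t, g y ^ 2) := by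
  set P := {p ∈ s ×ˢ t | R p.1 p.2}
  have hf : ∑ p ∈ P, f p.1 ^ 2 ≤ A * ∑ x ∈ s, f x ^ 2 := by
    rw [sum_filter, sum_product, mul_sum]
    refine sum_le_sum fun x hx ↦ ?_
    simp only [← sum_filter, sum_const, nsmul_eq_mul]
    exact mul_le_mul_of_nonneg_right (hA x hx) (sq_nonneg _)
  have hg : ∑ p ∈ P, g p.2 ^ 2 ≤ B * ∑ y ∈ t, g y ^ 2 := by
    rw [sum_filter, sum_product_right, mul_sum]
    refine sum_le_sum fun y hy ↦ ?_
    simp only [← sum_filter, sum_const, nsmul_eq_mul]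
    exact mul_le_mul_of_nonneg_right (hB y hy) (sq_nonneg _)
  calc ∑ x ∈ s, ∑ y ∈ t, (if R x y then f x * g y else 0)
      = ∑ p ∈ P, f p.1 * g p.2 := by rw [sum_filter, sum_product]
    _ ≤ √(∑ p ∈ P, f p.1 ^ 2) * √(∑ p ∈ P, g p.2 ^ 2) := sum_mul_le_sqrt_mul_sqrt _ _ _
    _ ≤ _ := by gcongr

theorem sum_coeffs_in_arithmetic_progression_general
    (lam₁ lam₂ : ℕ → ℂ) (K : ℝ) (hK : 1 ≤ K)
    (h₁ : ∀ Z : ℝ, 1 ≤ Z → ∑ n ∈ Finset.Icc 1 ⌊Z⌋₊, ‖lam₁ n‖ ^ 2 ≤ K * Z)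
    (h₂ : ∀ Z : ℝ, 1 ≤ Z → ∑ n ∈ Finset.Icc 1 ⌊Z⌋₊, ‖lam₂ n‖ ^ 2 ≤ K * Z)
    (c : ℕ) (a b : ℤ) (ha : Int.gcd a c = 1) (hb : Int.gcd b c = 1)
    (X Y : ℝ) (hX : 1 ≤ X) (hY : 1 ≤ Y) :
    ∑ n ∈ Finset.Icc 1 ⌊X⌋₊, ∑ m ∈ Finset.Icc 1 ⌊Y⌋₊,
        (if a * (m : ℤ) ≡ b * (n : ℤ) [ZMOD (c : ℤ)] then ‖lam₁ n‖ * ‖lam₂ m‖ else 0)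
      ≤ K * Real.sqrt (X * (Y / c + 1)) * Real.sqrt (Y * (X / c + 1)) := by
  have hK₀ : 0 ≤ K := by linarith
  have hcount₁ (n : ℕ) : (#{m ∈ Icc 1 ⌊Y⌋₊ | a * (m : ℕ) ≡ b * n [ZMOD c]} : ℝ) ≤ Y / c + 1 :=
    card_filter_mul_modEq_Icc_floor_le ha _ (by linarith)
  have hcount₂ (m : ℕ) :
      (#{n ∈ Icc 1 ⌊X⌋₊ | a * m ≡ b * (n : ℕ) [ZMOD c]} : ℝ) ≤ X / c + 1 := by
    simp_rw [Int.modEq_comm (a := a * _)]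
    exact card_filter_mul_modEq_Icc_floor_le hb _ (by linarith)
  calc _ ≤ √((Y / c + 1) * ∑ n ∈ Icc 1 ⌊X⌋₊, ‖lam₁ n‖ ^ 2)
          * √((X / c + 1) * ∑ m ∈ Icc 1 ⌊Y⌋₊, ‖lam₂ m‖ ^ 2) :=
        sum_ite_mul_le_sqrt_mul_sqrt _ _ _ _ _ (fun n _ ↦ hcount₁ n) (fun m _ ↦ hcount₂ m)
    _ ≤ √((Y / c + 1) * (K * X)) * √((X / c + 1) * (K * Y)) := by
        gcongr
        exacts [h₁ X hX, h₂ Y hY]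
    _ = K * √(X * (Y / c + 1)) * √(Y * (X / c + 1)) := by
        rw [mul_comm _ (K * X), mul_comm _ (K * Y), mul_assoc, mul_assoc, sqrt_mul hK₀,
          sqrt_mul hK₀, mul_mul_mul_comm, mul_self_sqrt hK₀, ← mul_assoc]

/-- If `λ₁, λ₂` satisfy the averaged second-moment bound `∑_{n ≤ Z} |λᵢ(n)|² ≤ K·Z`, then
for `(a,c) = (b,c) = 1` the sum of `|λ₁(n)|·|λ₂(m)|` over `n ≤ X`, `m ≤ Y` with
`a·m ≡ b·n (mod c)` is at most `K·√(X(Y/c+1))·√(Y(X/c+1))`. -/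
theorem sum_coeffs_in_arithmetic_progression
    (lam₁ lam₂ : ℕ → ℂ) (K : ℝ) (hK : 1 ≤ K)
    (h₁ : ∀ Z : ℝ, 1 ≤ Z → ∑ n ∈ Finset.Icc 1 ⌊Z⌋₊, ‖lam₁ n‖ ^ 2 ≤ K * Z)
    (h₂ : ∀ Z : ℝ, 1 ≤ Z → ∑ n ∈ Finset.Icc 1 ⌊Z⌋₊, ‖lam₂ n‖ ^ 2 ≤ K * Z)
    (c : ℕ) (hc : 0 < c) (a b : ℤ) (ha : Int.gcd a c = 1) (hb : Int.gcd b c = 1)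
    (X Y : ℝ) (hX : 1 ≤ X) (hY : 1 ≤ Y) :
    ∑ n ∈ Finset.Icc 1 ⌊X⌋₊, ∑ m ∈ Finset.Icc 1 ⌊Y⌋₊,
        (if a * (m : ℤ) ≡ b * (n : ℤ) [ZMOD (c : ℤ)] then ‖lam₁ n‖ * ‖lam₂ m‖ else 0)
      ≤ K * Real.sqrt (X * (Y / c + 1)) * Real.sqrt (Y * (X / c + 1)) :=
  sum_coeffs_in_arithmetic_progression_general lam₁ lam₂ K hK h₁ h₂ c a b ha hb X Y hX hY
end

section
/- There is an absolute constant C > 0 with the following property. Let λ₁, λ₂ : ℕ → ℂ be sequences and K ≥ 1 a real number such that ∑_{1 ≤ n ≤ Z} |λ₁(n)|² ≤ K·Z and ∑_{1 ≤ n ≤ Z} |λ₂(n)|² ≤ K·Z for every real Z ≥ 1. Let c be a positive integer, a, b integers with gcd(a, c) = gcd(b, c) = 1, let X, Y ≥ 1 be real, and let u, v be reals with 0 ≤ u ≤ 1/2 and 0 ≤ v ≤ 1/2. Then ∑ |λ₁(n)|·n^{−u}·|λ₂(m)|·m^{−v}, summed over pairs of positive integers n ≤ X, m ≤ Y with a·m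 ≡ b·n (mod c), is at most C·K·(1 + log X)·(1 + log Y)·(X^{1−u}·Y^{1−v}/c)·(1 + √(c/X) + √(c/Y) + c/√(X·Y)). -/
/-!
By Cauchy–Schwarz over the pairs `(n, m)` with `a m ≡ b n (mod c)`, the square of the sum is at
most the product of `∑ₙ #{m ≤ Y : a m ≡ b n} |λ₁(n)|² n^{-2u}` and its analogue in `m`. As `a` and
`b` are invertible modulo `c`, each `m` (resp. `n`) is pinned down to one residue class, so the
counts are at most `Y/c + 1` and `X/c + 1`. Partial summation turns the second-moment hypothesis
into `∑_{n ≤ X} |λ(n)|²/n ≤ K (1 + log X)`, hence `∑_{n ≤ X} |λ(n)|² n^{-2u} ≤ K (1 + log X) X^{1-2u}`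
for `u ≤ 1/2`. Finally `√((X/c + 1)(Y/c + 1)) ≤ (√(XY)/c) (1 + √(c/X)) (1 + √(c/Y))`, and the last
factor expands to the one in the statement; the constant is `1`.
-/

open Finset Real

theorem sum_Icc_le_of_sum_Icc_floor_le {a : ℕ → ℝ} {K : ℝ}
    (h : ∀ Z : ℝ, 1 ≤ Z → ∑ n ∈ Icc 1 ⌊Z⌋₊, a n ≤ K * Z) (M : ℕ) :
    ∑ n ∈ Icc 1 M, a n ≤ K * M := by
  rcases Nat.eq_zero_or_pos M with rfl | hM
  · simp
  simpa using h M (by exact_mod_cast hM)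

section PartialSummation

variable (a : ℕ → ℝ) {K : ℝ}

theorem sum_Icc_div_add_le_of_sum_Icc_le (hK : ∀ M : ℕ, ∑ n ∈ Icc 1 M, a n ≤ K * M)
    {N : ℕ} (hN : 1 ≤ N) :
    ∑ n ∈ Icc 1 N, a n / n + K ≤ (∑ n ∈ Icc 1 N, a n) / N + K * harmonic N := by
  induction N, hN using Nat.le_induction with
  | base => simp [harmonic]
  | succ N hN ih =>
    have hN0 : (0 : ℝ) < N := by exact_mod_cast hN
    have hstep : (∑ n ∈ Icc 1 N, a n) * (1 / N - 1 / (N + 1)) ≤ K / (N + 1) := by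
      calc (∑ n ∈ Icc 1 N, a n) * (1 / N - 1 / (N + 1))
          ≤ K * N * (1 / N - 1 / (N + 1)) := by
            gcongr
            · rw [sub_nonneg]; gcongr; linarith
            · exact hK N
        _ = K / (N + 1) := by field_simp; ring
    rw [sum_Icc_succ_top (by omega), sum_Icc_succ_top (by omega), harmonic_succ]
    push_cast
    calc ∑ n ∈ Icc 1 N, a n / n + a (N + 1) / (N + 1) + K
        ≤ (∑ n ∈ Icc 1 N, a n) / N + K * harmonic N + a (N + 1) / (N + 1) := by linarith
      _ = (∑ n ∈ Icc 1 N, a n + a (N + 1)) / (N + 1) + K * harmonic N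
            + (∑ n ∈ Icc 1 N, a n) * (1 / N - 1 / (N + 1)) := by field_simp; ring
      _ ≤ _ := by rw [mul_add, ← div_eq_mul_inv]; linarith

theorem sum_Icc_div_le_mul_one_add_log (hK0 : 0 ≤ K)
    (hK : ∀ M : ℕ, ∑ n ∈ Icc 1 M, a n ≤ K * M) (N : ℕ) :
    ∑ n ∈ Icc 1 N, a n / n ≤ K * (1 + Real.log N) := by
  rcases Nat.eq_zero_or_pos N with rfl | hN
  · simpa using hK0
  have hN0 : (0 : ℝ) < N := by exact_mod_cast hN
  have hmean : (∑ n ∈ Icc 1 N, a n) / N ≤ K := (div_le_iff₀ hN0).2 (hK N)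
  have hlog : K * harmonic N ≤ K * (1 + Real.log N) := by
    gcongr; exact_mod_cast harmonic_le_one_add_log N
  linarith [sum_Icc_div_add_le_of_sum_Icc_le a hK hN]

end PartialSummation

theorem rpow_neg_sq_le_rpow_div {x X u : ℝ} (hx : 0 < x) (hxX : x ≤ X) (hu : u ≤ 1 / 2) :
    (x ^ (-u)) ^ 2 ≤ X ^ (1 - 2 * u) / x := by
  have hsq : (x ^ (-u)) ^ 2 = x ^ (1 - 2 * u) / x := by
    rw [← Real.rpow_natCast, ← Real.rpow_mul hx.le, eq_div_iff hx.ne',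
      ← Real.rpow_add_one hx.ne']
    norm_num; ring_nf
  rw [hsq]
  gcongr
  linarith

theorem sum_Icc_floor_mul_rpow_neg_sq_le (a : ℕ → ℝ) {K X u : ℝ} (ha : ∀ n, 0 ≤ a n)
    (hK0 : 0 ≤ K) (hK : ∀ Z : ℝ, 1 ≤ Z → ∑ n ∈ Icc 1 ⌊Z⌋₊, a n ≤ K * Z) (hX : 1 ≤ X)
    (hu : u ≤ 1 / 2) :
    ∑ n ∈ Icc 1 ⌊X⌋₊, a n * ((n : ℝ) ^ (-u)) ^ 2 ≤ K * (1 + Real.log X) * X ^ (1 - 2 * u) := by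
  have hN : (1 : ℝ) ≤ ⌊X⌋₊ := by exact_mod_cast Nat.le_floor (by exact_mod_cast hX)
  have hmoment := sum_Icc_div_le_mul_one_add_log a hK0 (sum_Icc_le_of_sum_Icc_floor_le hK) ⌊X⌋₊
  calc ∑ n ∈ Icc 1 ⌊X⌋₊, a n * ((n : ℝ) ^ (-u)) ^ 2
      ≤ ∑ n ∈ Icc 1 ⌊X⌋₊, X ^ (1 - 2 * u) * (a n / n) := by
        refine sum_le_sum fun n hn => ?_
        obtain ⟨hn1, hnN⟩ := mem_Icc.1 hn
        have hn0 : (0 : ℝ) < n := by exact_mod_cast hn1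
        have hnX : (n : ℝ) ≤ X := (Nat.cast_le.2 hnN).trans (Nat.floor_le (by linarith))
        calc a n * ((n : ℝ) ^ (-u)) ^ 2 ≤ a n * (X ^ (1 - 2 * u) / n) :=
              mul_le_mul_of_nonneg_left (rpow_neg_sq_le_rpow_div hn0 hnX hu) (ha n)
          _ = X ^ (1 - 2 * u) * (a n / n) := by ring
    _ = X ^ (1 - 2 * u) * ∑ n ∈ Icc 1 ⌊X⌋₊, a n / n := (mul_sum ..).symm
    _ ≤ X ^ (1 - 2 * u) * (K * (1 + Real.log X)) := by
        gcongr
        exact hmoment.trans (by gcongr; exact Nat.floor_le (by linarith))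
    _ = K * (1 + Real.log X) * X ^ (1 - 2 * u) := by ring

theorem card_filter_Icc_le_of_modEq {c : ℕ} (N : ℕ) (p : ℕ → Prop) [DecidablePred p]
    (hp : ∀ m₁ m₂, p m₁ → p m₂ → m₁ ≡ m₂ [MOD c]) :
    #{m ∈ Icc 1 N | p m} ≤ N / c + 1 := by
  rw [← Nat.card_Iic (N / c)]
  refine card_le_card_of_injOn (· / c) (fun m hm => ?_) fun m₁ hm₁ m₂ hm₂ hdiv => ?_
  · simp only [coe_filter, mem_Icc, Set.mem_ofPred_eq] at hm
    simpa using Nat.div_le_div_right hm.1.2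
  · simp only [coe_filter, mem_Icc, Set.mem_ofPred_eq] at hm₁ hm₂
    have hmod : m₁ % c = m₂ % c := hp m₁ m₂ hm₁.2 hm₂.2
    rw [← Nat.div_add_mod m₁ c, ← Nat.div_add_mod m₂ c, hmod, show m₁ / c = m₂ / c from hdiv]

theorem card_filter_Icc_floor_mul_modEq_le {a : ℤ} {c : ℕ} (hc : 0 < c) (ha : IsCoprime a c)
    (t : ℤ) {X : ℝ} (hX : 0 ≤ X) :
    (#{m ∈ Icc 1 ⌊X⌋₊ | a * (m : ℕ) ≡ t [ZMOD c]} : ℝ) ≤ X / c + 1 := by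
  have hcard := card_filter_Icc_le_of_modEq ⌊X⌋₊ (fun m : ℕ => a * m ≡ t [ZMOD c])
    fun m₁ m₂ h₁ h₂ => by
      have hdvd : (c : ℤ) ∣ a * ((m₂ : ℤ) - m₁) := by
        rw [mul_sub]; exact (h₁.trans h₂.symm).dvd
      exact Int.natCast_modEq_iff.1 (Int.modEq_iff_dvd.2 (ha.symm.dvd_of_dvd_mul_left hdvd))
  calc (#{m ∈ Icc 1 ⌊X⌋₊ | a * (m : ℕ) ≡ t [ZMOD c]} : ℝ) ≤ ((⌊X⌋₊ / c + 1 : ℕ) : ℝ) :=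
        Nat.cast_le.2 hcard
    _ = ((⌊X⌋₊ / c : ℕ) : ℝ) + 1 := Nat.cast_succ _
    _ ≤ (⌊X⌋₊ : ℝ) / c + 1 := by gcongr; exact Nat.cast_div_le
    _ ≤ X / c + 1 := by gcongr; exact Nat.floor_le hX

section RelationSums

variable {ι κ : Type*} (s : Finset ι) (t : Finset κ) (R : ι → κ → Prop) [∀ i j, Decidable (R i j)]

theorem sum_sum_ite_sq_le (f : ι → ℝ) {A : ℝ} (hA : ∀ i ∈ s, (#{j ∈ t | R i j} : ℝ) ≤ A) :
    ∑ i ∈ s, ∑ j ∈ t, (if R i j then f i else 0) ^ 2 ≤ A * ∑ i ∈ s, f i ^ 2 := by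
  rw [mul_sum]
  refine sum_le_sum fun i hi => ?_
  simp only [ite_pow, zero_pow two_ne_zero, sum_ite, sum_const_zero, add_zero, sum_const,
    nsmul_eq_mul]
  exact mul_le_mul_of_nonneg_right (hA i hi) (sq_nonneg _)

theorem sq_sum_sum_ite_mul_le (f : ι → ℝ) (g : κ → ℝ) {A B : ℝ}
    (hA : ∀ i ∈ s, (#{j ∈ t | R i j} : ℝ) ≤ A) (hB : ∀ j ∈ t, (#{i ∈ s | R i j} : ℝ) ≤ B) :
    (∑ i ∈ s, ∑ j ∈ t, if R i j then f i * g j else 0) ^ 2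
      ≤ (A * ∑ i ∈ s, f i ^ 2) * (B * ∑ j ∈ t, g j ^ 2) := by
  have hrows := sum_sum_ite_sq_le s t R f hA
  have hcols := sum_sum_ite_sq_le t s (fun j i => R i j) g hB
  rw [sum_comm] at hcols
  have hcs := sum_mul_sq_le_sq_mul_sq (s ×ˢ t) (fun p => if R p.1 p.2 then f p.1 else 0)
    (fun p => if R p.1 p.2 then g p.2 else 0)
  simp only [sum_product, ite_zero_mul_ite_zero, and_self] at hcs
  exact hcs.trans (mul_le_mul hrows hcols (by positivity) (le_trans (by positivity) hrows))

end RelationSums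

theorem one_add_sqrt_div_mul_one_add_sqrt_div {c X Y : ℝ} (hc : 0 ≤ c) (hX : 0 ≤ X) :
    (1 + √(c / X)) * (1 + √(c / Y)) = 1 + √(c / X) + √(c / Y) + c / √(X * Y) := by
  rw [Real.sqrt_div hc, Real.sqrt_div hc, Real.sqrt_mul hX]
  linear_combination Real.mul_self_sqrt hc / (√X * √Y)

theorem rpow_mul_div_add_one_le {X c u : ℝ} (hX : 0 < X) (hc : 0 < c) :
    X ^ (1 - 2 * u) * (X / c + 1) ≤ (X ^ (1 - u)) ^ 2 / c * (1 + √(c / X)) ^ 2 := by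
  have hpow : (X ^ (1 - u)) ^ 2 = X ^ (1 - 2 * u) * X := by
    rw [← Real.rpow_natCast, ← Real.rpow_mul hX.le, ← Real.rpow_add_one hX.ne']
    ring_nf
  have hsq : 1 + c / X ≤ (1 + √(c / X)) ^ 2 := by
    nlinarith [Real.sq_sqrt (div_pos hc hX).le, Real.sqrt_nonneg (c / X)]
  calc X ^ (1 - 2 * u) * (X / c + 1) = X ^ (1 - 2 * u) * X / c * (1 + c / X) := by
        field_simp
    _ ≤ X ^ (1 - 2 * u) * X / c * (1 + √(c / X)) ^ 2 := by gcongr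
    _ = (X ^ (1 - u)) ^ 2 / c * (1 + √(c / X)) ^ 2 := by rw [hpow]

theorem rpow_mul_div_add_one_mul_le_sq {X Y c u v : ℝ} (hX : 0 < X) (hY : 0 < Y) (hc : 0 < c) :
    X ^ (1 - 2 * u) * (X / c + 1) * (Y ^ (1 - 2 * v) * (Y / c + 1))
      ≤ (X ^ (1 - u) * Y ^ (1 - v) / c *
          (1 + √(c / X) + √(c / Y) + c / √(X * Y))) ^ 2 := by
  rw [← one_add_sqrt_div_mul_one_add_sqrt_div hc.le hX.le]
  calc X ^ (1 - 2 * u) * (X / c + 1) * (Y ^ (1 - 2 * v) * (Y / c + 1))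
      ≤ (X ^ (1 - u)) ^ 2 / c * (1 + √(c / X)) ^ 2 *
          ((Y ^ (1 - v)) ^ 2 / c * (1 + √(c / Y)) ^ 2) := by
        exact mul_le_mul (rpow_mul_div_add_one_le hX hc) (rpow_mul_div_add_one_le hY hc)
          (by positivity) (by positivity)
    _ = _ := by ring

/-- Weighted version: there exists an absolute constant `C > 0` such that, under the
averaged second-moment bound on `λ₁, λ₂`, for `(a,c) = (b,c) = 1` and `0 ≤ u, v ≤ 1/2`,
the sum of `|λ₁(n)| n^{-u} · |λ₂(m)| m^{-v}` over `n ≤ X`, `m ≤ Y` with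
`a·m ≡ b·n (mod c)` is at most
`C·K·(1+log X)(1+log Y)·(X^{1-u} Y^{1-v}/c)·(1 + √(c/X) + √(c/Y) + c/√(XY))`. -/
theorem sum_weighted_coeffs_in_arithmetic_progression :
    ∃ C : ℝ, 0 < C ∧
      ∀ (lam₁ lam₂ : ℕ → ℂ) (K : ℝ), 1 ≤ K →
        (∀ Z : ℝ, 1 ≤ Z → ∑ n ∈ Finset.Icc 1 ⌊Z⌋₊, ‖lam₁ n‖ ^ 2 ≤ K * Z) →
        (∀ Z : ℝ, 1 ≤ Z → ∑ n ∈ Finset.Icc 1 ⌊Z⌋₊, ‖lam₂ n‖ ^ 2 ≤ K * Z) →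
        ∀ (c : ℕ), 0 < c → ∀ (a b : ℤ), Int.gcd a c = 1 → Int.gcd b c = 1 →
        ∀ (X Y : ℝ), 1 ≤ X → 1 ≤ Y →
        ∀ (u v : ℝ), 0 ≤ u → u ≤ 1 / 2 → 0 ≤ v → v ≤ 1 / 2 →
          ∑ n ∈ Finset.Icc 1 ⌊X⌋₊, ∑ m ∈ Finset.Icc 1 ⌊Y⌋₊,
              (if a * (m : ℤ) ≡ b * (n : ℤ) [ZMOD (c : ℤ)] then
                ‖lam₁ n‖ * (n : ℝ) ^ (-u) * (‖lam₂ m‖ * (m : ℝ) ^ (-v)) else 0)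
            ≤ C * K * (1 + Real.log X) * (1 + Real.log Y) *
              (X ^ (1 - u) * Y ^ (1 - v) / c) *
              (1 + Real.sqrt (c / X) + Real.sqrt (c / Y) + c / Real.sqrt (X * Y)) := by
  refine ⟨1, one_pos, fun lam₁ lam₂ K hK h₁ h₂ c hc a b hac hbc X Y hX hY u v _ hu _ hv => ?_⟩
  have hL₁ : 1 ≤ 1 + Real.log X := le_add_of_nonneg_right (Real.log_nonneg hX)
  have hL₂ : 1 ≤ 1 + Real.log Y := le_add_of_nonneg_right (Real.log_nonneg hY)
  have hf : ∑ n ∈ Icc 1 ⌊X⌋₊, (‖lam₁ n‖ * (n : ℝ) ^ (-u)) ^ 2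
      ≤ K * (1 + Real.log X) * X ^ (1 - 2 * u) := by
    simpa only [mul_pow] using sum_Icc_floor_mul_rpow_neg_sq_le _ (fun n => sq_nonneg _)
      (by linarith) h₁ hX hu
  have hg : ∑ m ∈ Icc 1 ⌊Y⌋₊, (‖lam₂ m‖ * (m : ℝ) ^ (-v)) ^ 2
      ≤ K * (1 + Real.log Y) * Y ^ (1 - 2 * v) := by
    simpa only [mul_pow] using sum_Icc_floor_mul_rpow_neg_sq_le _ (fun n => sq_nonneg _)
      (by linarith) h₂ hY hv
  refine le_of_pow_le_pow_left₀ two_ne_zero (by positivity)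
    ((sq_sum_sum_ite_mul_le _ _ _ _ _ (A := Y / c + 1) (B := X / c + 1)
      (fun n _ => ?_) (fun m _ => ?_)).trans ?_)
  · exact card_filter_Icc_floor_mul_modEq_le hc (Int.isCoprime_iff_gcd_eq_one.2 hac) _
      (by linarith)
  · simpa only [Int.modEq_comm (a := a * m)] using
      card_filter_Icc_floor_mul_modEq_le hc (Int.isCoprime_iff_gcd_eq_one.2 hbc) (a * m)
        (X := X) (by linarith)
  calc ((Y / c + 1) * ∑ n ∈ Icc 1 ⌊X⌋₊, (‖lam₁ n‖ * (n : ℝ) ^ (-u)) ^ 2) *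
        ((X / c + 1) * ∑ m ∈ Icc 1 ⌊Y⌋₊, (‖lam₂ m‖ * (m : ℝ) ^ (-v)) ^ 2)
      ≤ (Y / c + 1) * (K * (1 + Real.log X) * X ^ (1 - 2 * u)) *
          ((X / c + 1) * (K * (1 + Real.log Y) * Y ^ (1 - 2 * v))) := by gcongr
    _ = K ^ 2 * ((1 + Real.log X) * (1 + Real.log Y)) *
          (X ^ (1 - 2 * u) * (X / c + 1) * (Y ^ (1 - 2 * v) * (Y / c + 1))) := by ring
    _ ≤ K ^ 2 * ((1 + Real.log X) * (1 + Real.log Y)) ^ 2 *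
          (X ^ (1 - u) * Y ^ (1 - v) / c * (1 + √(c / X) + √(c / Y) + c / √(X * Y))) ^ 2 := by
        gcongr
        · exact le_self_pow₀ (one_le_mul_of_one_le_of_one_le hL₁ hL₂) two_ne_zero
        · exact rpow_mul_div_add_one_mul_le_sq (by linarith) (by linarith) (Nat.cast_pos.2 hc)
    _ = _ := by ring
end
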